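/- Let N ≥ 1 and q > 0, q ≠ 1 real. Set D = (K^{1/2} − K^{−1/2})/(q − q^{−1}), let G be the diagonal matrix with entries G_{rr} = (q^{(N−2r)/2} + q^{−(N−2r)/2})^{−1/2} (i.e. G = (K^{1/2} + K^{−1/2})^{−1/2}), and set A = G·(E + F)·G. Then the matrix identity D²·A − (q + q^{−1})·D·A·D + A·D² = A holds. (Combination of Corollary 4.6, which identifies A as the matrix of 1⊗C on S^{⊗3}, with the relation verified in the proof of Theorem 4.7; it shows that the pair D, A satisfies the defining relation of the nonstandard deformation U′_q so₃.) -/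

import Mathlib

noncomputable section

/-- The quantum number `[x] = (q^x − q^{−x})/(q − q⁻¹)` for real `x` (real powers). -/
def qnum (q : ℝ) (x : ℝ) : ℝ := (q ^ x - q ^ (-x)) / (q - q⁻¹)

/-- The matrix of `E` in the `(N+1)`-dimensional irreducible representation of
`U_q sl₂`: `E_{r−1,r} = ([N−r+1]·[r])^{1/2}` for `1 ≤ r ≤ N`. -/
def Emat (q : ℝ) (N : ℕ) : Matrix (Fin (N + 1)) (Fin (N + 1)) ℝ :=
  fun r c => if (c : ℕ) = (r : ℕ) + 1 then
    Real.sqrt (qnum q ((N : ℝ) - (c : ℕ) + 1) * qnum q ((c : ℕ) : ℝ)) else 0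

/-- `F = Eᵀ`. -/
def Fmat (q : ℝ) (N : ℕ) : Matrix (Fin (N + 1)) (Fin (N + 1)) ℝ :=
  Matrix.transpose (Emat q N)

/-- The diagonal matrix `K^{1/2}` with entries `q^{(N−2r)/2}`. -/
def Khalf (q : ℝ) (N : ℕ) : Matrix (Fin (N + 1)) (Fin (N + 1)) ℝ :=
  Matrix.diagonal fun r => q ^ (((N : ℝ) - 2 * (r : ℕ)) / 2)

/-- The diagonal matrix `K^{−1/2}` with entries `q^{−(N−2r)/2}` (the inverse of `K^{1/2}`). -/
def Kneghalf (q : ℝ) (N : ℕ) : Matrix (Fin (N + 1)) (Fin (N + 1)) ℝ :=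
  Matrix.diagonal fun r => q ^ (-(((N : ℝ) - 2 * (r : ℕ)) / 2))

/-- `D = (K^{1/2} − K^{−1/2})/(q − q⁻¹)`. -/
def Dmat (q : ℝ) (N : ℕ) : Matrix (Fin (N + 1)) (Fin (N + 1)) ℝ :=
  (q - q⁻¹)⁻¹ • (Khalf q N - Kneghalf q N)

/-- `G = (K^{1/2} + K^{−1/2})^{−1/2}`, the diagonal matrix with entries
`(q^{(N−2r)/2} + q^{−(N−2r)/2})^{−1/2}`. -/
def Gmat (q : ℝ) (N : ℕ) : Matrix (Fin (N + 1)) (Fin (N + 1)) ℝ :=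
  Matrix.diagonal fun r =>
    (q ^ (((N : ℝ) - 2 * (r : ℕ)) / 2) + q ^ (-(((N : ℝ) - 2 * (r : ℕ)) / 2)))
      ^ (-(1 : ℝ) / 2)

/-- `A = G·(E+F)·G`, the matrix of `1 ⊗ C` on `S^{⊗3}` (Corollary 4.6). -/
def Amat (q : ℝ) (N : ℕ) : Matrix (Fin (N + 1)) (Fin (N + 1)) ℝ :=
  Gmat q N * (Emat q N + Fmat q N) * Gmat q N

/-!
Both `D` and `G` are diagonal, and `A` is supported on the two off-diagonals `|i - j| = 1`.
For a diagonal `D = diag(d)` the `(i, j)` entry of `D²A − s·DAD + AD²` is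
`(d_i² − s·d_i·d_j + d_j²)·A_{ij}`, and here `d_r = [(N − 2r)/2]`, so on the support of `A` the
scalar factor is `[x]² − (q + q⁻¹)[x][x − 1] + [x − 1]²` for some real `x`, which equals `1`.
-/

open Matrix

lemma sub_inv_ne_zero_of_pos_of_ne_one {q : ℝ} (hq0 : 0 < q) (hq1 : q ≠ 1) : q - q⁻¹ ≠ 0 := by
  intro h
  have hsq : q * q = 1 := by
    field_simp at h
    linarith
  have : (q - 1) * (q + 1) = 0 := by linear_combination hsq
  rcases mul_eq_zero.mp this with h | h
  · exact hq1 (by linarith)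
  · linarith

lemma qnum_sq_sub_mul_add_sq {q : ℝ} (hq0 : 0 < q) (hq1 : q ≠ 1) (x : ℝ) :
    qnum q x ^ 2 - (q + q⁻¹) * (qnum q x * qnum q (x - 1)) + qnum q (x - 1) ^ 2 = 1 := by
  have hq := sub_inv_ne_zero_of_pos_of_ne_one hq0 hq1
  have hu : q ^ x ≠ 0 := (Real.rpow_pos_of_pos hq0 x).ne'
  have hshift : q ^ (x - 1) = q ^ x / q := by rw [Real.rpow_sub hq0, Real.rpow_one]
  have hshift' : q ^ (-(x - 1)) = q / q ^ x := by rw [Real.rpow_neg hq0.le, hshift, inv_div]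
  rw [qnum, qnum, hshift, hshift', Real.rpow_neg hq0.le]
  set u := q ^ x
  calc _ = ((u - u⁻¹) ^ 2 - (q + q⁻¹) * ((u - u⁻¹) * (u / q - q / u)) + (u / q - q / u) ^ 2)
        / (q - q⁻¹) ^ 2 := by field_simp
    _ = 1 := by
      rw [div_eq_one_iff_eq (pow_ne_zero 2 hq)]
      field_simp
      ring

lemma diagonal_sq_mul_sub_smul_add_mul_sq_apply {n R : Type*} [Fintype n] [DecidableEq n]
    [CommRing R] (d : n → R) (s : R) (A : Matrix n n R) (i j : n) :
    (diagonal d ^ 2 * A - s • (diagonal d * A * diagonal d) + A * diagonal d ^ 2) i j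
      = (d i ^ 2 - s * (d i * d j) + d j ^ 2) * A i j := by
  simp only [sq, diagonal_mul_diagonal, Matrix.add_apply, Matrix.sub_apply, Matrix.smul_apply,
    diagonal_mul, mul_diagonal, smul_eq_mul]
  ring

lemma Dmat_eq_diagonal (q : ℝ) (N : ℕ) :
    Dmat q N = diagonal fun r : Fin (N + 1) => qnum q (((N : ℝ) - 2 * (r : ℕ)) / 2) := by
  ext i j
  by_cases h : i = j <;> simp [Dmat, Khalf, Kneghalf, qnum, h, div_eq_inv_mul]

lemma Amat_apply_ne_zero {q : ℝ} {N : ℕ} {i j : Fin (N + 1)} (h : Amat q N i j ≠ 0) :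
    (j : ℕ) = i + 1 ∨ (i : ℕ) = j + 1 := by
  by_contra! hij
  exact h (by simp [Amat, Gmat, diagonal_mul, mul_diagonal, Emat, Fmat, hij.1, hij.2])

theorem D_A_relation_general (q : ℝ) (hq0 : 0 < q) (hq1 : q ≠ 1) (N : ℕ) :
    Dmat q N ^ 2 * Amat q N - (q + q⁻¹) • (Dmat q N * Amat q N * Dmat q N) +
      Amat q N * Dmat q N ^ 2 = Amat q N := by
  ext i j
  rw [Dmat_eq_diagonal, diagonal_sq_mul_sub_smul_add_mul_sq_apply]
  by_cases hA : Amat q N i j = 0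
  · rw [hA, mul_zero]
  suffices weight_succ : ∀ a b : Fin (N + 1), (b : ℕ) = a + 1 →
      qnum q (((N : ℝ) - 2 * (b : ℕ)) / 2) = qnum q (((N : ℝ) - 2 * (a : ℕ)) / 2 - 1) by
    rcases Amat_apply_ne_zero hA with h | h
    · rw [weight_succ i j h, qnum_sq_sub_mul_add_sq hq0 hq1, one_mul]
    · rw [weight_succ j i h]
      linear_combination
        Amat q N i j * qnum_sq_sub_mul_add_sq hq0 hq1 (((N : ℝ) - 2 * (j : ℕ)) / 2)
  intro a b h
  rw [h]
  congr 1
  push_cast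
  ring

/-- Combination of Corollary 4.6 with the proof of Theorem 4.7: the pair `D`, `A`
satisfies the defining relation `D²A − (q+q⁻¹)·DAD + AD² = A` of the nonstandard
deformation `U′_q so₃`. -/
theorem D_A_relation (q : ℝ) (hq0 : 0 < q) (hq1 : q ≠ 1) (N : ℕ) (hN : 1 ≤ N) :
    Dmat q N ^ 2 * Amat q N - (q + q⁻¹) • (Dmat q N * Amat q N * Dmat q N) +
      Amat q N * Dmat q N ^ 2 = Amat q N :=
  D_A_relation_general q hq0 hq1 N
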